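/- Let α,β>0, γ,δ≥0, 0≤q<1, and let n,N∈ℕ. Suppose D,E are n×n real matrices, W∈ℝ^n is a row vector and V∈ℝ^n is a column vector satisfying the DEHP algebra: DE−qED = D+E, W(αE−γD) = W, and (βD−δE)V = V. Define ν:{0,1}^N→ℝ by ν(τ) := W·(∏_{i=1}^N(1_{τ_i=0}E + 1_{τ_i=1}D))·V. Then ∑_{τ∈{0,1}^N} ν(τ)Q(τ,τ') = 0 for every τ'∈{0,1}^N, where Q is the open ASEP generator with parameters α,β,γ,δ,q. In particular, if in addition ν(τ)≥0 for all τ and Z := W(D+E)^N V ≠ 0, then μ(τ) := ν(τ)/Z defines a stationary probability measure for the open ASEP on {0,1}^N. -/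
import Mathlib


open Matrix in

/-- Off-diagonal jump rates of the open ASEP on `{1,…,N}` with parameters `α,β,γ,δ,q`:
bulk right jumps at rate `1`, bulk left jumps at rate `q`, entry/exit at the left boundary at
rates `α`/`γ`, and entry/exit at the right boundary at rates `δ`/`β`. -/
noncomputable def asepJump (N : ℕ) (α β γ δ q : ℝ) (τ τ' : Fin N → Bool) : ℝ :=
  (∑ i : Fin N, ∑ j : Fin N,
    if (j : ℕ) = (i : ℕ) + 1 ∧ τ i = true ∧ τ j = false ∧
        τ' = Function.update (Function.update τ i false) j true then (1 : ℝ) else 0) +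
  q * (∑ i : Fin N, ∑ j : Fin N,
    if (j : ℕ) = (i : ℕ) + 1 ∧ τ i = false ∧ τ j = true ∧
        τ' = Function.update (Function.update τ i true) j false then (1 : ℝ) else 0) +
  α * (∑ i : Fin N,
    if (i : ℕ) = 0 ∧ τ i = false ∧ τ' = Function.update τ i true then (1 : ℝ) else 0) +
  γ * (∑ i : Fin N,
    if (i : ℕ) = 0 ∧ τ i = true ∧ τ' = Function.update τ i false then (1 : ℝ) else 0) +
  δ * (∑ i : Fin N,
    if (i : ℕ) = N - 1 ∧ τ i = false ∧ τ' = Function.update τ i true then (1 : ℝ) else 0) +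
  β * (∑ i : Fin N,
    if (i : ℕ) = N - 1 ∧ τ i = true ∧ τ' = Function.update τ i false then (1 : ℝ) else 0)

/-- The generator matrix `Q` of the open ASEP on `{0,1}^N`. -/
noncomputable def asepGen (N : ℕ) (α β γ δ q : ℝ) (τ τ' : Fin N → Bool) : ℝ :=
  if τ' = τ then -∑ σ ∈ Finset.univ.filter (fun σ => σ ≠ τ), asepJump N α β γ δ q τ σ
  else asepJump N α β γ δ q τ τ'

/-- `μ` is a stationary measure for the open ASEP generator: `∑_τ μ(τ) Q(τ,τ') = 0` for all
`τ'`. -/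
noncomputable def IsStationaryASEP (N : ℕ) (α β γ δ q : ℝ) (μ : (Fin N → Bool) → ℝ) : Prop :=
  ∀ τ' : Fin N → Bool, ∑ τ : Fin N → Bool, μ τ * asepGen N α β γ δ q τ τ' = 0

section ASEPproofAux
open Matrix

section ASEPaux
variable {n : ℕ} (D E : Matrix (Fin n) (Fin n) ℝ) (W V : Fin n → ℝ)

/-- linear functional. -/
def PhiA (A : Matrix (Fin n) (Fin n) ℝ) : ℝ := W ⬝ᵥ A.mulVec V

lemma PhiA_add (A B) : PhiA W V (A + B) = PhiA W V A + PhiA W V B := by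
  simp [PhiA, Matrix.add_mulVec, dotProduct_add]

lemma PhiA_sub (A B) : PhiA W V (A - B) = PhiA W V A - PhiA W V B := by
  simp [PhiA, Matrix.sub_mulVec, dotProduct_sub]

lemma PhiA_smul (c : ℝ) (A) : PhiA W V (c • A) = c * PhiA W V A := by
  simp [PhiA, Matrix.smul_mulVec, dotProduct_smul, smul_eq_mul]

/-- the list of matrices. -/
def XlA {N : ℕ} (τ : Fin N → Bool) : List (Matrix (Fin n) (Fin n) ℝ) :=
  List.ofFn fun i => if τ i then D else E

lemma XlA_length {N : ℕ} (τ : Fin N → Bool) : (XlA D E τ).length = N := by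
  simp [XlA]

def nuA {N : ℕ} (τ : Fin N → Bool) : ℝ := PhiA W V (XlA D E τ).prod

lemma XlA_take_congr {N : ℕ} {τ σ : Fin N → Bool} (m : ℕ)
    (h : ∀ k : Fin N, (k : ℕ) < m → τ k = σ k) :
    (XlA D E τ).take m = (XlA D E σ).take m := by
  apply List.ext_getElem
  · simp [XlA]
  · intro k h1 h2
    simp only [List.getElem_take, XlA, List.getElem_ofFn]
    have hk : k < m := by simp only [List.length_take, XlA_length] at h1; omega
    have hkN : k < N := by simp only [List.length_take, XlA_length] at h1; omega
    exact congrArg (fun b => if b then D else E) (h ⟨k, hkN⟩ hk)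

lemma XlA_drop_congr {N : ℕ} {τ σ : Fin N → Bool} (m : ℕ)
    (h : ∀ k : Fin N, m ≤ (k : ℕ) → τ k = σ k) :
    (XlA D E τ).drop m = (XlA D E σ).drop m := by
  apply List.ext_getElem
  · simp [XlA]
  · intro k h1 h2
    simp only [List.getElem_drop, XlA, List.getElem_ofFn]
    have hkN : m + k < N := by simp only [List.length_drop, XlA_length] at h1; omega
    exact congrArg (fun b => if b then D else E) (h ⟨m + k, hkN⟩ (Nat.le_add_right m k))

lemma XlA_prod_split {N : ℕ} (τ : Fin N → Bool) (i : Fin N) :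
    (XlA D E τ).prod =
      ((XlA D E τ).take (i : ℕ)).prod *
        ((if τ i then D else E) * ((XlA D E τ).drop ((i : ℕ) + 1)).prod) := by
  have hlt : (i : ℕ) < (XlA D E τ).length := by simp [XlA]
  conv_lhs => rw [← List.prod_take_mul_prod_drop (XlA D E τ) (i : ℕ)]
  rw [List.drop_eq_getElem_cons hlt, List.prod_cons]
  congr 1
  simp [XlA]

lemma XlA_take_succ_prod {N : ℕ} (τ : Fin N → Bool) (i : Fin N) :
    ((XlA D E τ).take ((i : ℕ) + 1)).prod =
      ((XlA D E τ).take (i : ℕ)).prod * (if τ i then D else E) := by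
  have hlt : (i : ℕ) < (XlA D E τ).length := by simp [XlA]
  rw [List.take_succ, List.prod_append]
  congr 1
  rw [List.getElem?_eq_getElem hlt]
  simp [XlA]

/-- delete-one quantity -/
def ddA {N : ℕ} (τ : Fin N → Bool) (i : ℕ) : ℝ :=
  PhiA W V (((XlA D E τ).take i).prod * ((XlA D E τ).drop (i + 1)).prod)

/-- signed delete-one quantity -/
def eeA {N : ℕ} (τ : Fin N → Bool) (i : ℕ) : ℝ :=
  if h : i < N then (if τ ⟨i, h⟩ then -(ddA D E W V τ i) else ddA D E W V τ i) else 0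

end ASEPaux


section Helpers

/-- update two points -/
noncomputable def upd2 {N : ℕ} (τ : Fin N → Bool) (i j : Fin N) (a b : Bool) : Fin N → Bool :=
  Function.update (Function.update τ i a) j b

lemma upd2_apply_i {N : ℕ} (τ : Fin N → Bool) {i j : Fin N} (hij : i ≠ j) (a b : Bool) :
    upd2 τ i j a b i = a := by
  simp [upd2, Function.update_of_ne hij, Function.update_self]

lemma upd2_apply_j {N : ℕ} (τ : Fin N → Bool) (i j : Fin N) (a b : Bool) :
    upd2 τ i j a b j = b := by
  simp [upd2, Function.update_self]

lemma upd2_apply_other {N : ℕ} (τ : Fin N → Bool) {i j k : Fin N} (hki : k ≠ i) (hkj : k ≠ j)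
    (a b : Bool) : upd2 τ i j a b k = τ k := by
  simp [upd2, Function.update_of_ne hki, Function.update_of_ne hkj]

lemma swap_dir {N : ℕ} {i j : Fin N} (hij : i ≠ j) {a b : Bool} {τ τ' : Fin N → Bool}
    (h1 : τ i = a) (h2 : τ j = b) (h3 : τ' = upd2 τ i j (!a) (!b)) :
    τ' i = !a ∧ τ' j = !b ∧ τ = upd2 τ' i j a b := by
  subst h3
  refine ⟨upd2_apply_i τ hij _ _, upd2_apply_j τ i j _ _, funext fun k => ?_⟩
  by_cases hki : k = i
  · subst hki; rw [upd2_apply_i _ hij, h1]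
  · by_cases hkj : k = j
    · subst hkj; rw [upd2_apply_j, h2]
    · rw [upd2_apply_other _ hki hkj, upd2_apply_other _ hki hkj]

lemma swap_iff {N : ℕ} {i j : Fin N} (hij : i ≠ j) (a b : Bool) (τ τ' : Fin N → Bool) :
    (τ i = a ∧ τ j = b ∧ τ' = upd2 τ i j (!a) (!b)) ↔
      (τ' i = !a ∧ τ' j = !b ∧ τ = upd2 τ' i j a b) := by
  constructor
  · rintro ⟨h1, h2, h3⟩; exact swap_dir hij h1 h2 h3
  · rintro ⟨h1, h2, h3⟩
    rw [show a = !!a by simp] at h3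
    rw [show b = !!b by simp] at h3
    have := swap_dir hij h1 h2 h3
    simpa using this

lemma flip_dir {N : ℕ} {i : Fin N} {a : Bool} {τ τ' : Fin N → Bool}
    (h1 : τ i = a) (h3 : τ' = Function.update τ i (!a)) :
    τ' i = !a ∧ τ = Function.update τ' i a := by
  subst h3
  refine ⟨Function.update_self _ _ _, funext fun k => ?_⟩
  by_cases hki : k = i
  · subst hki; simp [Function.update_self, h1]
  · simp [Function.update_of_ne hki]

lemma flip_iff {N : ℕ} (i : Fin N) (a : Bool) (τ τ' : Fin N → Bool) :
    (τ i = a ∧ τ' = Function.update τ i (!a)) ↔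
      (τ' i = !a ∧ τ = Function.update τ' i a) := by
  constructor
  · rintro ⟨h1, h3⟩; exact flip_dir h1 h3
  · rintro ⟨h1, h3⟩
    rw [show a = !!a by simp] at h3
    have := flip_dir h1 h3
    simpa using this

lemma sum_ite_eq_pt {β : Type*} [Fintype β] [DecidableEq β] (Q : Prop) [Decidable Q] (c : β)
    (v : β → ℝ) : (∑ τ : β, if Q ∧ τ = c then v τ else 0) = if Q then v c else 0 := by
  by_cases hQ : Q <;> simp [hQ]

lemma sum_fin_val_eq {N : ℕ} (m : ℕ) (f : Fin N → ℝ) :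
    (∑ j : Fin N, if (j : ℕ) = m then f j else 0) = if h : m < N then f ⟨m, h⟩ else 0 := by
  split
  · next h =>
    rw [Finset.sum_eq_single ⟨m, h⟩]
    · simp
    · intro b _ hb
      rw [if_neg]
      intro hbm
      exact hb (Fin.ext hbm)
    · simp
  · next h =>
    apply Finset.sum_eq_zero
    intro i _
    rw [if_neg]
    intro hbm
    exact h (hbm ▸ i.isLt)

end Helpers

section Core
variable {n : ℕ} (q : ℝ) (D E : Matrix (Fin n) (Fin n) ℝ) (W V : Fin n → ℝ)

lemma PhiA_DE (hDE : D * E - q • (E * D) = D + E) (T S : Matrix (Fin n) (Fin n) ℝ) :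
    PhiA W V (T * (D * (E * S))) - q * PhiA W V (T * (E * (D * S))) =
      PhiA W V (T * (D * S)) + PhiA W V (T * (E * S)) := by
  have key : T * (D * (E * S)) - q • (T * (E * (D * S))) = T * (D * S) + T * (E * S) := by
    have h2 := congrArg (fun A => T * (A * S)) hDE
    simpa [Matrix.sub_mul, Matrix.add_mul, Matrix.mul_sub, Matrix.mul_add, Matrix.smul_mul,
      Matrix.mul_smul, mul_assoc] using h2
  rw [← PhiA_smul W V q, ← PhiA_sub, key, PhiA_add]

lemma nuA_split2 {N : ℕ} (σ : Fin N → Bool) (i j : Fin N) (hj : (j : ℕ) = (i : ℕ) + 1) :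
    nuA D E W V σ = PhiA W V (((XlA D E σ).take (i : ℕ)).prod *
      ((if σ i then D else E) * ((if σ j then D else E) *
        ((XlA D E σ).drop ((j : ℕ) + 1)).prod))) := by
  have hlt : (j : ℕ) < (XlA D E σ).length := by simp [XlA_length]
  unfold nuA
  rw [XlA_prod_split D E σ i, ← hj, List.drop_eq_getElem_cons hlt, List.prod_cons]
  congr 2
  simp [XlA]

lemma take_upd2 {N : ℕ} (τ' : Fin N → Bool) {i j : Fin N} (hij : (i:ℕ) < (j:ℕ)) (a b : Bool) :
    (XlA D E (upd2 τ' i j a b)).take (i : ℕ) = (XlA D E τ').take (i : ℕ) := by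
  apply XlA_take_congr
  intro k hk
  have h1 : k ≠ i := fun h => by subst h; omega
  have h2 : k ≠ j := fun h => by subst h; omega
  exact upd2_apply_other τ' h1 h2 a b

lemma drop_upd2 {N : ℕ} (τ' : Fin N → Bool) {i j : Fin N} (hij : (i:ℕ) < (j:ℕ)) (a b : Bool) :
    (XlA D E (upd2 τ' i j a b)).drop ((j : ℕ) + 1) = (XlA D E τ').drop ((j : ℕ) + 1) := by
  apply XlA_drop_congr
  intro k hk
  have h1 : k ≠ i := fun h => by subst h; omega
  have h2 : k ≠ j := fun h => by subst h; omega
  exact upd2_apply_other τ' h1 h2 a b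

lemma ddA_at_i {N : ℕ} (τ' : Fin N → Bool) (i j : Fin N) (hj : (j : ℕ) = (i : ℕ) + 1) :
    ddA D E W V τ' (i : ℕ) = PhiA W V (((XlA D E τ').take (i : ℕ)).prod *
      ((if τ' j then D else E) * ((XlA D E τ').drop ((j : ℕ) + 1)).prod)) := by
  have hlt : (j : ℕ) < (XlA D E τ').length := by simp [XlA_length]
  have hg : (XlA D E τ')[(j:ℕ)]'hlt = (if τ' j then D else E) := by simp [XlA]
  unfold ddA
  rw [← hj, List.drop_eq_getElem_cons hlt, List.prod_cons, hg]

lemma ddA_at_j {N : ℕ} (τ' : Fin N → Bool) (i j : Fin N) (hj : (j : ℕ) = (i : ℕ) + 1) :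
    ddA D E W V τ' (j : ℕ) = PhiA W V ((((XlA D E τ').take (i : ℕ)).prod *
      (if τ' i then D else E)) * ((XlA D E τ').drop ((j : ℕ) + 1)).prod) := by
  unfold ddA
  rw [hj, XlA_take_succ_prod]

lemma eeA_at {N : ℕ} (τ' : Fin N → Bool) (i : Fin N) :
    eeA D E W V τ' (i : ℕ) = if τ' i then -(ddA D E W V τ' (i:ℕ)) else ddA D E W V τ' (i:ℕ) := by
  rw [eeA, dif_pos i.isLt]

lemma bond {N : ℕ} (hDE : D * E - q • (E * D) = D + E) (τ' : Fin N → Bool) (i j : Fin N)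
    (hj : (j : ℕ) = (i : ℕ) + 1) :
    ((if τ' i = false ∧ τ' j = true then
        nuA D E W V (upd2 τ' i j true false) - q * nuA D E W V τ' else 0) +
    (if τ' i = true ∧ τ' j = false then
        q * nuA D E W V (upd2 τ' i j false true) - nuA D E W V τ' else 0))
    = eeA D E W V τ' (i : ℕ) - eeA D E W V τ' (j : ℕ) := by
  have hij : i ≠ j := fun h => by rw [h] at hj; omega
  have hijv : (i : ℕ) < (j : ℕ) := by omega
  set T := ((XlA D E τ').take (i : ℕ)).prod with hT
  set S := ((XlA D E τ').drop ((j : ℕ) + 1)).prod with hS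
  have hnu : ∀ a b : Bool, nuA D E W V (upd2 τ' i j a b) =
      PhiA W V (T * ((if a then D else E) * ((if b then D else E) * S))) := by
    intro a b
    rw [nuA_split2 D E W V _ i j hj, take_upd2 D E τ' hijv, drop_upd2 D E τ' hijv,
      upd2_apply_i τ' hij, upd2_apply_j]
  have hnu' : nuA D E W V τ' =
      PhiA W V (T * ((if τ' i then D else E) * ((if τ' j then D else E) * S))) := by
    rw [nuA_split2 D E W V τ' i j hj]
  have hdi := ddA_at_i D E W V τ' i j hj
  have hdj := ddA_at_j D E W V τ' i j hj
  rw [← hT, ← hS] at hdi hdj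
  rw [eeA_at, eeA_at]
  have A1 := PhiA_DE q D E W V hDE T S
  have ma : ∀ X : Matrix (Fin n) (Fin n) ℝ, PhiA W V ((T * X) * S) = PhiA W V (T * (X * S)) :=
    fun X => by rw [mul_assoc]
  cases hfi : τ' i <;> cases hfj : τ' j
  · simp only [hfi, hfj] at hdi hdj
    simp only [Bool.false_eq_true, if_false, ite_false] at hdi hdj
    rw [ma] at hdj
    simp [hfi, hfj, hdi, hdj]
  · rw [hnu true false, hnu']
    simp only [hfi, hfj] at hdi hdj ⊢
    simp only [Bool.false_eq_true, Bool.true_eq_false, if_false, if_true, ite_false, ite_true,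
      and_self, and_false, false_and, true_and, and_true] at hdi hdj ⊢
    rw [hdi, hdj, ma]
    linarith
  · rw [hnu false true, hnu']
    simp only [hfi, hfj] at hdi hdj ⊢
    simp only [Bool.false_eq_true, Bool.true_eq_false, if_false, if_true, ite_false, ite_true,
      and_self, and_false, false_and, true_and, and_true] at hdi hdj ⊢
    rw [hdi, hdj, ma]
    linarith
  · simp only [hfi, hfj] at hdi hdj
    simp only [ite_true, if_true] at hdi hdj
    rw [ma] at hdj
    simp [hfi, hfj, hdi, hdj]

lemma left_bd {N : ℕ} (a c : ℝ) (hW : Matrix.vecMul W (a • E - c • D) = W)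
    (τ' : Fin N → Bool) (i : Fin N) (hi : (i : ℕ) = 0) :
    ((if τ' i = true then a * nuA D E W V (Function.update τ' i false) - c * nuA D E W V τ'
        else 0) +
     (if τ' i = false then c * nuA D E W V (Function.update τ' i true) - a * nuA D E W V τ'
        else 0)) = -(eeA D E W V τ' 0) := by
  set S := ((XlA D E τ').drop 1).prod with hS
  have hsplit : ∀ σ : Fin N → Bool, (∀ k : Fin N, 1 ≤ (k : ℕ) → σ k = τ' k) →
      nuA D E W V σ = PhiA W V ((if σ i then D else E) * S) := by
    intro σ hσ
    rw [nuA, XlA_prod_split D E σ i, hi]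
    rw [List.take_zero, List.prod_nil, one_mul, hS, XlA_drop_congr D E 1 hσ]
  have hup : ∀ b : Bool, nuA D E W V (Function.update τ' i b) =
      PhiA W V ((if b then D else E) * S) := by
    intro b
    rw [hsplit (Function.update τ' i b) (fun k hk => Function.update_of_ne
      (fun h => by subst h; omega) _ _), Function.update_self]
  have h0 : nuA D E W V τ' = PhiA W V ((if τ' i then D else E) * S) :=
    hsplit τ' (fun _ _ => rfl)
  have hcomb : a * PhiA W V (E * S) - c * PhiA W V (D * S) = PhiA W V S := by
    have h1 : a * PhiA W V (E * S) - c * PhiA W V (D * S) =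
        PhiA W V ((a • E - c • D) * S) := by
      rw [Matrix.sub_mul, PhiA_sub, Matrix.smul_mul, Matrix.smul_mul, PhiA_smul, PhiA_smul]
    rw [h1, PhiA, ← Matrix.mulVec_mulVec, Matrix.dotProduct_mulVec, hW, PhiA]
  have hdd : ddA D E W V τ' 0 = PhiA W V S := by
    rw [ddA, List.take_zero, List.prod_nil, one_mul, zero_add]
  have hee : eeA D E W V τ' 0 = if τ' i then -(PhiA W V S) else PhiA W V S := by
    have h0N : (0 : ℕ) < N := by have := i.isLt; omega
    rw [eeA, dif_pos h0N, hdd]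
    have : (⟨0, h0N⟩ : Fin N) = i := Fin.ext (by simp only [Fin.val_mk]; omega)
    rw [this]
  cases hfi : τ' i <;>
    simp only [hfi, hee, hup, h0, Bool.false_eq_true, Bool.true_eq_false, if_false, if_true,
      ite_true, ite_false, neg_neg] <;>
    linarith

lemma right_bd {N : ℕ} (b d : ℝ) (hV : Matrix.mulVec (b • D - d • E) V = V)
    (τ' : Fin N → Bool) (i : Fin N) (hi : (i : ℕ) = N - 1) :
    ((if τ' i = true then d * nuA D E W V (Function.update τ' i false) - b * nuA D E W V τ'
        else 0) +
     (if τ' i = false then b * nuA D E W V (Function.update τ' i true) - d * nuA D E W V τ'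
        else 0)) = eeA D E W V τ' (N - 1) := by
  have hN : 0 < N := by have := i.isLt; omega
  have hi1 : (i : ℕ) + 1 = N := by have := i.isLt; omega
  set T := ((XlA D E τ').take (N - 1)).prod with hT
  have hdropnil : ∀ σ : Fin N → Bool, (XlA D E σ).drop ((i : ℕ) + 1) = [] := by
    intro σ
    apply List.drop_eq_nil_of_le
    rw [XlA_length, hi1]
  have hsplit : ∀ σ : Fin N → Bool, (∀ k : Fin N, (k : ℕ) < N - 1 → σ k = τ' k) →
      nuA D E W V σ = PhiA W V (T * (if σ i then D else E)) := by
    intro σ hσ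
    rw [nuA, XlA_prod_split D E σ i, hdropnil, List.prod_nil, mul_one, hi,
      hT, XlA_take_congr D E (N - 1) hσ]
  have hup : ∀ bb : Bool, nuA D E W V (Function.update τ' i bb) =
      PhiA W V (T * (if bb then D else E)) := by
    intro bb
    rw [hsplit (Function.update τ' i bb) (fun k hk => Function.update_of_ne
      (fun h => by subst h; omega) _ _), Function.update_self]
  have h0 : nuA D E W V τ' = PhiA W V (T * (if τ' i then D else E)) :=
    hsplit τ' (fun _ _ => rfl)
  have hcomb : b * PhiA W V (T * D) - d * PhiA W V (T * E) = PhiA W V T := by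
    have h1 : b * PhiA W V (T * D) - d * PhiA W V (T * E) =
        PhiA W V (T * (b • D - d • E)) := by
      rw [Matrix.mul_sub, PhiA_sub, Matrix.mul_smul, Matrix.mul_smul, PhiA_smul, PhiA_smul]
    rw [h1, PhiA, ← Matrix.mulVec_mulVec, hV, PhiA]
  have hdd : ddA D E W V τ' (N - 1) = PhiA W V T := by
    rw [ddA, ← hT]
    have : N - 1 + 1 = N := by omega
    rw [this]
    have : (XlA D E τ').drop N = [] := by
      apply List.drop_eq_nil_of_le
      rw [XlA_length]
    rw [this, List.prod_nil, mul_one]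
  have hee : eeA D E W V τ' (N - 1) = if τ' i then -(PhiA W V T) else PhiA W V T := by
    have h0N : N - 1 < N := by omega
    rw [eeA, dif_pos h0N, hdd]
    have : (⟨N - 1, h0N⟩ : Fin N) = i := Fin.ext (by simp only [Fin.val_mk]; omega)
    rw [this]
  cases hfi : τ' i <;>
    simp only [hfi, hee, hup, h0, Bool.false_eq_true, Bool.true_eq_false, if_false, if_true,
      ite_true, ite_false, neg_neg] <;>
    linarith

lemma asepJump_self (N : ℕ) (α β γ δ q : ℝ) (τ : Fin N → Bool) :
    asepJump N α β γ δ q τ τ = 0 := by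
  unfold asepJump
  have e1 : (∑ i : Fin N, ∑ j : Fin N,
      if (j : ℕ) = (i : ℕ) + 1 ∧ τ i = true ∧ τ j = false ∧
          τ = Function.update (Function.update τ i false) j true then (1 : ℝ) else 0) = 0 :=
    Finset.sum_eq_zero fun i _ => Finset.sum_eq_zero fun j _ => if_neg (by
      rintro ⟨hj, hi, hjf, he⟩
      have hij : i ≠ j := fun h => by subst h; omega
      have hx := congrFun he i
      rw [Function.update_of_ne hij, Function.update_self] at hx
      simp [hi] at hx)
  have e2 : (∑ i : Fin N, ∑ j : Fin N,
      if (j : ℕ) = (i : ℕ) + 1 ∧ τ i = false ∧ τ j = true ∧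
          τ = Function.update (Function.update τ i true) j false then (1 : ℝ) else 0) = 0 :=
    Finset.sum_eq_zero fun i _ => Finset.sum_eq_zero fun j _ => if_neg (by
      rintro ⟨hj, hi, hjf, he⟩
      have hij : i ≠ j := fun h => by subst h; omega
      have hx := congrFun he i
      rw [Function.update_of_ne hij, Function.update_self] at hx
      simp [hi] at hx)
  have e3 : ∀ b : Bool, ∀ m : ℕ, (∑ i : Fin N,
      if (i : ℕ) = m ∧ τ i = b ∧ τ = Function.update τ i (!b) then (1 : ℝ) else 0) = 0 := by
    intro b m
    refine Finset.sum_eq_zero fun i _ => if_neg ?_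
    rintro ⟨hm, hi, he⟩
    have hx := congrFun he i
    rw [Function.update_self] at hx
    rw [hi] at hx
    cases b <;> simp at hx
  have e3' := e3 false
  have e4' := e3 true
  simp only [Bool.not_false, Bool.not_true] at e3' e4'
  rw [e1, e2, e3' 0, e4' 0, e3' (N-1), e4' (N-1)]
  ring

lemma sum_gen (N : ℕ) (α β γ δ q : ℝ) (f : (Fin N → Bool) → ℝ) (τ' : Fin N → Bool) :
    ∑ τ : Fin N → Bool, f τ * asepGen N α β γ δ q τ τ' =
      (∑ τ : Fin N → Bool, f τ * asepJump N α β γ δ q τ τ') -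
        f τ' * ∑ σ : Fin N → Bool, asepJump N α β γ δ q τ' σ := by
  have key : ∀ τ, f τ * asepGen N α β γ δ q τ τ' =
      f τ * asepJump N α β γ δ q τ τ' -
        (if τ = τ' then f τ' * ∑ σ : Fin N → Bool, asepJump N α β γ δ q τ' σ else 0) := by
    intro τ
    by_cases h : τ = τ'
    · subst h
      rw [asepGen, if_pos rfl, if_pos rfl]
      have hfil : ∑ σ ∈ Finset.univ.filter (fun σ => σ ≠ τ), asepJump N α β γ δ q τ σ
          = ∑ σ : Fin N → Bool, asepJump N α β γ δ q τ σ := by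
        rw [Finset.sum_filter]
        refine Finset.sum_congr rfl fun σ _ => ?_
        by_cases hσ : σ = τ
        · subst hσ; simp [asepJump_self]
        · simp [hσ]
      rw [hfil, asepJump_self]
      ring
    · rw [asepGen, if_neg (fun hh => h hh.symm), if_neg h, sub_zero]
  rw [Finset.sum_congr rfl (fun τ _ => key τ), Finset.sum_sub_distrib]
  congr 1
  rw [Finset.sum_ite_eq' Finset.univ τ'
    (fun _ => f τ' * ∑ σ : Fin N → Bool, asepJump N α β γ δ q τ' σ)]
  simp

lemma swap_iff' {N : ℕ} (i j : Fin N) (τ τ' : Fin N → Bool) (a b : Bool) :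
    ((j : ℕ) = (i : ℕ) + 1 ∧ τ i = a ∧ τ j = b ∧ τ' = upd2 τ i j (!a) (!b)) ↔
      (((j : ℕ) = (i : ℕ) + 1 ∧ τ' i = !a ∧ τ' j = !b) ∧ τ = upd2 τ' i j a b) := by
  constructor
  · rintro ⟨hj, h1, h2, h3⟩
    have hij : i ≠ j := fun h => by subst h; omega
    obtain ⟨g1, g2, g3⟩ := (swap_iff hij a b τ τ').mp ⟨h1, h2, h3⟩
    exact ⟨⟨hj, g1, g2⟩, g3⟩
  · rintro ⟨⟨hj, g1, g2⟩, g3⟩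
    have hij : i ≠ j := fun h => by subst h; omega
    obtain ⟨h1, h2, h3⟩ := (swap_iff hij a b τ τ').mpr ⟨g1, g2, g3⟩
    exact ⟨hj, h1, h2, h3⟩

lemma flip_iff' {N : ℕ} (i : Fin N) (τ τ' : Fin N → Bool) (a : Bool) (m : ℕ) :
    ((i : ℕ) = m ∧ τ i = a ∧ τ' = Function.update τ i (!a)) ↔
      (((i : ℕ) = m ∧ τ' i = !a) ∧ τ = Function.update τ' i a) := by
  constructor
  · rintro ⟨hm, h1, h2⟩
    obtain ⟨g1, g2⟩ := (flip_iff i a τ τ').mp ⟨h1, h2⟩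
    exact ⟨⟨hm, g1⟩, g2⟩
  · rintro ⟨⟨hm, g1⟩, g2⟩
    obtain ⟨h1, h2⟩ := (flip_iff i a τ τ').mpr ⟨g1, g2⟩
    exact ⟨hm, h1, h2⟩

section BigSums
variable {n : ℕ} (D E : Matrix (Fin n) (Fin n) ℝ) (W V : Fin n → ℝ)

/-- transform one bulk group of the inflow sum -/
lemma inflow_bulk {N : ℕ} (τ' : Fin N → Bool) (a b : Bool) :
    (∑ τ : Fin N → Bool, nuA D E W V τ * ∑ i : Fin N, ∑ j : Fin N,
        if (j : ℕ) = (i : ℕ) + 1 ∧ τ i = a ∧ τ j = b ∧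
            τ' = upd2 τ i j (!a) (!b) then (1 : ℝ) else 0) =
      ∑ i : Fin N, ∑ j : Fin N,
        if (j : ℕ) = (i : ℕ) + 1 ∧ τ' i = !a ∧ τ' j = !b then
          nuA D E W V (upd2 τ' i j a b) else 0 := by
  have h1 : ∀ τ : Fin N → Bool, nuA D E W V τ * ∑ i : Fin N, ∑ j : Fin N,
      (if (j : ℕ) = (i : ℕ) + 1 ∧ τ i = a ∧ τ j = b ∧
          τ' = upd2 τ i j (!a) (!b) then (1 : ℝ) else 0) =
      ∑ i : Fin N, ∑ j : Fin N,
        (if ((j : ℕ) = (i : ℕ) + 1 ∧ τ' i = !a ∧ τ' j = !b) ∧ τ = upd2 τ' i j a b then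
          nuA D E W V τ else 0) := by
    intro τ
    rw [Finset.mul_sum]
    refine Finset.sum_congr rfl fun i _ => ?_
    rw [Finset.mul_sum]
    refine Finset.sum_congr rfl fun j _ => ?_
    rw [mul_ite, mul_one, mul_zero]
    exact if_congr (swap_iff' i j τ τ' a b) rfl rfl
  rw [Finset.sum_congr rfl fun τ _ => h1 τ, Finset.sum_comm]
  refine Finset.sum_congr rfl fun i _ => ?_
  rw [Finset.sum_comm]
  refine Finset.sum_congr rfl fun j _ => ?_
  exact sum_ite_eq_pt _ _ _

/-- transform one boundary group of the inflow sum -/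
lemma inflow_bd {N : ℕ} (τ' : Fin N → Bool) (a : Bool) (m : ℕ) :
    (∑ τ : Fin N → Bool, nuA D E W V τ * ∑ i : Fin N,
        if (i : ℕ) = m ∧ τ i = a ∧ τ' = Function.update τ i (!a) then (1 : ℝ) else 0) =
      ∑ i : Fin N, if (i : ℕ) = m ∧ τ' i = !a then
          nuA D E W V (Function.update τ' i a) else 0 := by
  have h1 : ∀ τ : Fin N → Bool, nuA D E W V τ * ∑ i : Fin N,
      (if (i : ℕ) = m ∧ τ i = a ∧ τ' = Function.update τ i (!a) then (1 : ℝ) else 0) =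
      ∑ i : Fin N,
        (if ((i : ℕ) = m ∧ τ' i = !a) ∧ τ = Function.update τ' i a then
          nuA D E W V τ else 0) := by
    intro τ
    rw [Finset.mul_sum]
    refine Finset.sum_congr rfl fun i _ => ?_
    rw [mul_ite, mul_one, mul_zero]
    exact if_congr (flip_iff' i τ τ' a m) rfl rfl
  rw [Finset.sum_congr rfl fun τ _ => h1 τ, Finset.sum_comm]
  refine Finset.sum_congr rfl fun i _ => ?_
  exact sum_ite_eq_pt _ _ _

/-- transform one bulk group of the outflow sum -/
lemma outflow_bulk {N : ℕ} (τ' : Fin N → Bool) (a b : Bool) :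
    (∑ σ : Fin N → Bool, ∑ i : Fin N, ∑ j : Fin N,
        if (j : ℕ) = (i : ℕ) + 1 ∧ τ' i = a ∧ τ' j = b ∧
            σ = upd2 τ' i j (!a) (!b) then (1 : ℝ) else 0) =
      ∑ i : Fin N, ∑ j : Fin N,
        if (j : ℕ) = (i : ℕ) + 1 ∧ τ' i = a ∧ τ' j = b then (1 : ℝ) else 0 := by
  rw [Finset.sum_comm]
  refine Finset.sum_congr rfl fun i _ => ?_
  rw [Finset.sum_comm]
  refine Finset.sum_congr rfl fun j _ => ?_
  have h1 : ∀ σ : Fin N → Bool,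
      (if (j : ℕ) = (i : ℕ) + 1 ∧ τ' i = a ∧ τ' j = b ∧
          σ = upd2 τ' i j (!a) (!b) then (1 : ℝ) else 0) =
      (if ((j : ℕ) = (i : ℕ) + 1 ∧ τ' i = a ∧ τ' j = b) ∧
          σ = upd2 τ' i j (!a) (!b) then (1 : ℝ) else 0) := by
    intro σ
    exact if_congr (by tauto) rfl rfl
  rw [Finset.sum_congr rfl fun σ _ => h1 σ, sum_ite_eq_pt]

/-- transform one boundary group of the outflow sum -/
lemma outflow_bd {N : ℕ} (τ' : Fin N → Bool) (a : Bool) (m : ℕ) :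
    (∑ σ : Fin N → Bool, ∑ i : Fin N,
        if (i : ℕ) = m ∧ τ' i = a ∧ σ = Function.update τ' i (!a) then (1 : ℝ) else 0) =
      ∑ i : Fin N, if (i : ℕ) = m ∧ τ' i = a then (1 : ℝ) else 0 := by
  rw [Finset.sum_comm]
  refine Finset.sum_congr rfl fun i _ => ?_
  have h1 : ∀ σ : Fin N → Bool,
      (if (i : ℕ) = m ∧ τ' i = a ∧ σ = Function.update τ' i (!a) then (1 : ℝ) else 0) =
      (if ((i : ℕ) = m ∧ τ' i = a) ∧ σ = Function.update τ' i (!a) then (1 : ℝ) else 0) := by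
    intro σ
    exact if_congr (by tauto) rfl rfl
  rw [Finset.sum_congr rfl fun σ _ => h1 σ, sum_ite_eq_pt]

end BigSums

lemma telly (N : ℕ) (ee : ℕ → ℝ) :
    (∑ k ∈ Finset.range N, if k + 1 < N then ee k - ee (k + 1) else 0) = ee 0 - ee (N - 1) := by
  cases N with
  | zero => simp
  | succ M =>
    rw [Finset.sum_range_succ, if_neg (by omega), add_zero]
    rw [Finset.sum_congr rfl (fun k hk => if_pos (by
      have := Finset.mem_range.mp hk; omega))]
    rw [Finset.sum_range_sub' ee M]
    congr 1

section Claims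
variable {n : ℕ} (D E : Matrix (Fin n) (Fin n) ℝ) (W V : Fin n → ℝ)

lemma claimC1 {N : ℕ} (q : ℝ) (hDE : D * E - q • (E * D) = D + E) (τ' : Fin N → Bool) :
    ((∑ i : Fin N, ∑ j : Fin N, if (j : ℕ) = (i : ℕ) + 1 ∧ τ' i = false ∧ τ' j = true then
        nuA D E W V (upd2 τ' i j true false) else 0)
     + q * (∑ i : Fin N, ∑ j : Fin N, if (j : ℕ) = (i : ℕ) + 1 ∧ τ' i = true ∧ τ' j = false then
        nuA D E W V (upd2 τ' i j false true) else 0)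
     - nuA D E W V τ' * (∑ i : Fin N, ∑ j : Fin N,
        if (j : ℕ) = (i : ℕ) + 1 ∧ τ' i = true ∧ τ' j = false then (1 : ℝ) else 0)
     - q * (nuA D E W V τ' * (∑ i : Fin N, ∑ j : Fin N,
        if (j : ℕ) = (i : ℕ) + 1 ∧ τ' i = false ∧ τ' j = true then (1 : ℝ) else 0)))
    = eeA D E W V τ' 0 - eeA D E W V τ' (N - 1) := by
  have merge : ∀ f g h k : Fin N → Fin N → ℝ,
      ((∑ i : Fin N, ∑ j : Fin N, f i j) + q * (∑ i : Fin N, ∑ j : Fin N, g i j)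
        - nuA D E W V τ' * (∑ i : Fin N, ∑ j : Fin N, h i j)
        - q * (nuA D E W V τ' * (∑ i : Fin N, ∑ j : Fin N, k i j)))
      = ∑ i : Fin N, ∑ j : Fin N,
          (f i j + q * g i j - nuA D E W V τ' * h i j - q * (nuA D E W V τ' * k i j)) := by
    intro f g h k
    simp only [Finset.mul_sum, ← Finset.sum_add_distrib, ← Finset.sum_sub_distrib]
  rw [merge]
  have perij : ∀ i j : Fin N,
      ((if (j : ℕ) = (i : ℕ) + 1 ∧ τ' i = false ∧ τ' j = true then
          nuA D E W V (upd2 τ' i j true false) else 0)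
       + q * (if (j : ℕ) = (i : ℕ) + 1 ∧ τ' i = true ∧ τ' j = false then
          nuA D E W V (upd2 τ' i j false true) else 0)
       - nuA D E W V τ' * (if (j : ℕ) = (i : ℕ) + 1 ∧ τ' i = true ∧ τ' j = false
          then (1 : ℝ) else 0)
       - q * (nuA D E W V τ' * (if (j : ℕ) = (i : ℕ) + 1 ∧ τ' i = false ∧ τ' j = true
          then (1 : ℝ) else 0)))
      = if (j : ℕ) = (i : ℕ) + 1 then
          eeA D E W V τ' (i : ℕ) - eeA D E W V τ' (j : ℕ) else 0 := by
    intro i j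
    by_cases hj : (j : ℕ) = (i : ℕ) + 1
    · rw [if_pos hj, ← bond q D E W V hDE τ' i j hj]
      simp only [hj, true_and]
      cases hfi : τ' i <;> cases hfj : τ' j <;>
        simp [hfi, hfj] <;> ring
    · simp [hj]
  rw [Finset.sum_congr rfl fun i _ => Finset.sum_congr rfl fun j _ => perij i j]
  have inner : ∀ i : Fin N,
      (∑ j : Fin N, if (j : ℕ) = (i : ℕ) + 1 then
          eeA D E W V τ' (i : ℕ) - eeA D E W V τ' (j : ℕ) else 0)
      = if (i : ℕ) + 1 < N then
          eeA D E W V τ' (i : ℕ) - eeA D E W V τ' ((i : ℕ) + 1) else 0 := by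
    intro i
    rw [sum_fin_val_eq ((i : ℕ) + 1) (fun j => eeA D E W V τ' (i : ℕ) - eeA D E W V τ' (j : ℕ))]
    by_cases h : (i : ℕ) + 1 < N
    · rw [dif_pos h, if_pos h]
    · rw [dif_neg h, if_neg h]
  rw [Finset.sum_congr rfl fun i _ => inner i]
  have := Fin.sum_univ_eq_sum_range (fun k =>
    if k + 1 < N then eeA D E W V τ' k - eeA D E W V τ' (k + 1) else 0) N
  rw [this, telly]

lemma claimC2 {N : ℕ} (al ga : ℝ) (hW : Matrix.vecMul W (al • E - ga • D) = W)
    (τ' : Fin N → Bool) :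
    (al * (∑ i : Fin N, if (i : ℕ) = 0 ∧ τ' i = true then
        nuA D E W V (Function.update τ' i false) else 0)
     + ga * (∑ i : Fin N, if (i : ℕ) = 0 ∧ τ' i = false then
        nuA D E W V (Function.update τ' i true) else 0)
     - nuA D E W V τ' * (al * (∑ i : Fin N, if (i : ℕ) = 0 ∧ τ' i = false then (1 : ℝ) else 0))
     - nuA D E W V τ' * (ga * (∑ i : Fin N, if (i : ℕ) = 0 ∧ τ' i = true then (1 : ℝ) else 0)))
    = -(eeA D E W V τ' 0) := by
  have merge : ∀ f g h k : Fin N → ℝ,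
      (al * (∑ i : Fin N, f i) + ga * (∑ i : Fin N, g i)
        - nuA D E W V τ' * (al * (∑ i : Fin N, h i))
        - nuA D E W V τ' * (ga * (∑ i : Fin N, k i)))
      = ∑ i : Fin N, (al * f i + ga * g i - nuA D E W V τ' * (al * h i)
          - nuA D E W V τ' * (ga * k i)) := by
    intro f g h k
    simp only [Finset.mul_sum, ← Finset.sum_add_distrib, ← Finset.sum_sub_distrib]
  rw [merge]
  have peri : ∀ i : Fin N,
      (al * (if (i : ℕ) = 0 ∧ τ' i = true then nuA D E W V (Function.update τ' i false) else 0)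
       + ga * (if (i : ℕ) = 0 ∧ τ' i = false then nuA D E W V (Function.update τ' i true) else 0)
       - nuA D E W V τ' * (al * (if (i : ℕ) = 0 ∧ τ' i = false then (1 : ℝ) else 0))
       - nuA D E W V τ' * (ga * (if (i : ℕ) = 0 ∧ τ' i = true then (1 : ℝ) else 0)))
      = if (i : ℕ) = 0 then -(eeA D E W V τ' 0) else 0 := by
    intro i
    by_cases hi : (i : ℕ) = 0
    · rw [if_pos hi, ← left_bd D E W V al ga hW τ' i hi]
      simp only [hi, true_and]
      cases hfi : τ' i <;> simp [hfi] <;> ring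
    · simp [hi]
  rw [Finset.sum_congr rfl fun i _ => peri i]
  rw [sum_fin_val_eq 0 (fun _ => -(eeA D E W V τ' 0))]
  by_cases h : 0 < N
  · rw [dif_pos h]
  · rw [dif_neg h, eeA, dif_neg (by omega)]
    simp

lemma claimC3 {N : ℕ} (be de : ℝ) (hV : Matrix.mulVec (be • D - de • E) V = V)
    (τ' : Fin N → Bool) :
    (de * (∑ i : Fin N, if (i : ℕ) = N - 1 ∧ τ' i = true then
        nuA D E W V (Function.update τ' i false) else 0)
     + be * (∑ i : Fin N, if (i : ℕ) = N - 1 ∧ τ' i = false then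
        nuA D E W V (Function.update τ' i true) else 0)
     - nuA D E W V τ' * (de * (∑ i : Fin N, if (i : ℕ) = N - 1 ∧ τ' i = false then (1 : ℝ) else 0))
     - nuA D E W V τ' * (be * (∑ i : Fin N, if (i : ℕ) = N - 1 ∧ τ' i = true then (1 : ℝ) else 0)))
    = eeA D E W V τ' (N - 1) := by
  have merge : ∀ f g h k : Fin N → ℝ,
      (de * (∑ i : Fin N, f i) + be * (∑ i : Fin N, g i)
        - nuA D E W V τ' * (de * (∑ i : Fin N, h i))
        - nuA D E W V τ' * (be * (∑ i : Fin N, k i)))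
      = ∑ i : Fin N, (de * f i + be * g i - nuA D E W V τ' * (de * h i)
          - nuA D E W V τ' * (be * k i)) := by
    intro f g h k
    simp only [Finset.mul_sum, ← Finset.sum_add_distrib, ← Finset.sum_sub_distrib]
  rw [merge]
  have peri : ∀ i : Fin N,
      (de * (if (i : ℕ) = N - 1 ∧ τ' i = true then nuA D E W V (Function.update τ' i false) else 0)
       + be * (if (i : ℕ) = N - 1 ∧ τ' i = false then nuA D E W V (Function.update τ' i true) else 0)
       - nuA D E W V τ' * (de * (if (i : ℕ) = N - 1 ∧ τ' i = false then (1 : ℝ) else 0))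
       - nuA D E W V τ' * (be * (if (i : ℕ) = N - 1 ∧ τ' i = true then (1 : ℝ) else 0)))
      = if (i : ℕ) = N - 1 then eeA D E W V τ' (N - 1) else 0 := by
    intro i
    by_cases hi : (i : ℕ) = N - 1
    · rw [if_pos hi, ← right_bd D E W V be de hV τ' i hi]
      simp only [hi, true_and]
      cases hfi : τ' i <;> simp [hfi] <;> ring
    · simp [hi]
  rw [Finset.sum_congr rfl fun i _ => peri i]
  rw [sum_fin_val_eq (N - 1) (fun _ => eeA D E W V τ' (N - 1))]
  by_cases h : N - 1 < N
  · rw [dif_pos h]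
  · rw [dif_neg h, eeA, dif_neg (by omega)]

end Claims

section Master
variable {n : ℕ} (D E : Matrix (Fin n) (Fin n) ℝ) (W V : Fin n → ℝ)

lemma master {N : ℕ} (al be ga de q : ℝ)
    (hDE : D * E - q • (E * D) = D + E)
    (hW : Matrix.vecMul W (al • E - ga • D) = W)
    (hV : Matrix.mulVec (be • D - de • E) V = V)
    (τ' : Fin N → Bool) :
    ∑ τ : Fin N → Bool, nuA D E W V τ * asepJump N al be ga de q τ τ' =
      nuA D E W V τ' * ∑ σ : Fin N → Bool, asepJump N al be ga de q τ' σ := by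
  have I1 := inflow_bulk D E W V τ' true false
  have I2 := inflow_bulk D E W V τ' false true
  have I3 := inflow_bd D E W V τ' false 0
  have I4 := inflow_bd D E W V τ' true 0
  have I5 := inflow_bd D E W V τ' false (N - 1)
  have I6 := inflow_bd D E W V τ' true (N - 1)
  simp only [Bool.not_true, Bool.not_false, upd2] at I1 I2 I3 I4 I5 I6
  have O1 := outflow_bulk τ' true false
  have O2 := outflow_bulk τ' false true
  have O3 := outflow_bd τ' false 0
  have O4 := outflow_bd τ' true 0
  have O5 := outflow_bd τ' false (N - 1)
  have O6 := outflow_bd τ' true (N - 1)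
  simp only [Bool.not_true, Bool.not_false, upd2] at O1 O2 O3 O4 O5 O6
  have EXP : ∑ τ : Fin N → Bool, nuA D E W V τ * asepJump N al be ga de q τ τ' =
      (∑ τ : Fin N → Bool, nuA D E W V τ * (∑ i : Fin N, ∑ j : Fin N, if (j : ℕ) = (i : ℕ) + 1 ∧ τ i = true ∧ τ j = false ∧ τ' = Function.update (Function.update τ i false) j true then (1:ℝ) else 0)) +
      (q * ∑ τ : Fin N → Bool, nuA D E W V τ * (∑ i : Fin N, ∑ j : Fin N, if (j : ℕ) = (i : ℕ) + 1 ∧ τ i = false ∧ τ j = true ∧ τ' = Function.update (Function.update τ i true) j false then (1:ℝ) else 0) +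
      (al * ∑ τ : Fin N → Bool, nuA D E W V τ * (∑ i : Fin N, if (i : ℕ) = 0 ∧ τ i = false ∧ τ' = Function.update τ i true then (1:ℝ) else 0) +
      (ga * ∑ τ : Fin N → Bool, nuA D E W V τ * (∑ i : Fin N, if (i : ℕ) = 0 ∧ τ i = true ∧ τ' = Function.update τ i false then (1:ℝ) else 0) +
      (de * ∑ τ : Fin N → Bool, nuA D E W V τ * (∑ i : Fin N, if (i : ℕ) = N - 1 ∧ τ i = false ∧ τ' = Function.update τ i true then (1:ℝ) else 0) +
      be * ∑ τ : Fin N → Bool, nuA D E W V τ * (∑ i : Fin N, if (i : ℕ) = N - 1 ∧ τ i = true ∧ τ' = Function.update τ i false then (1:ℝ) else 0))))) := by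
    rw [Finset.sum_congr rfl (fun τ _ => (by simp only [asepJump]; ring :
      nuA D E W V τ * asepJump N al be ga de q τ τ' =
      nuA D E W V τ * (∑ i : Fin N, ∑ j : Fin N, if (j : ℕ) = (i : ℕ) + 1 ∧ τ i = true ∧ τ j = false ∧ τ' = Function.update (Function.update τ i false) j true then (1:ℝ) else 0) +
      (q * (nuA D E W V τ * (∑ i : Fin N, ∑ j : Fin N, if (j : ℕ) = (i : ℕ) + 1 ∧ τ i = false ∧ τ j = true ∧ τ' = Function.update (Function.update τ i true) j false then (1:ℝ) else 0)) +
      (al * (nuA D E W V τ * (∑ i : Fin N, if (i : ℕ) = 0 ∧ τ i = false ∧ τ' = Function.update τ i true then (1:ℝ) else 0)) +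
      (ga * (nuA D E W V τ * (∑ i : Fin N, if (i : ℕ) = 0 ∧ τ i = true ∧ τ' = Function.update τ i false then (1:ℝ) else 0)) +
      (de * (nuA D E W V τ * (∑ i : Fin N, if (i : ℕ) = N - 1 ∧ τ i = false ∧ τ' = Function.update τ i true then (1:ℝ) else 0)) +
      be * (nuA D E W V τ * (∑ i : Fin N, if (i : ℕ) = N - 1 ∧ τ i = true ∧ τ' = Function.update τ i false then (1:ℝ) else 0))))))))]
    rw [Finset.sum_add_distrib, Finset.sum_add_distrib, Finset.sum_add_distrib,
      Finset.sum_add_distrib, Finset.sum_add_distrib, ← Finset.mul_sum, ← Finset.mul_sum,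
      ← Finset.mul_sum, ← Finset.mul_sum, ← Finset.mul_sum]
  have EXPo : ∑ σ : Fin N → Bool, asepJump N al be ga de q τ' σ =
      (∑ σ : Fin N → Bool, (∑ i : Fin N, ∑ j : Fin N, if (j : ℕ) = (i : ℕ) + 1 ∧ τ' i = true ∧ τ' j = false ∧ σ = Function.update (Function.update τ' i false) j true then (1:ℝ) else 0)) +
      (q * ∑ σ : Fin N → Bool, (∑ i : Fin N, ∑ j : Fin N, if (j : ℕ) = (i : ℕ) + 1 ∧ τ' i = false ∧ τ' j = true ∧ σ = Function.update (Function.update τ' i true) j false then (1:ℝ) else 0) +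
      (al * ∑ σ : Fin N → Bool, (∑ i : Fin N, if (i : ℕ) = 0 ∧ τ' i = false ∧ σ = Function.update τ' i true then (1:ℝ) else 0) +
      (ga * ∑ σ : Fin N → Bool, (∑ i : Fin N, if (i : ℕ) = 0 ∧ τ' i = true ∧ σ = Function.update τ' i false then (1:ℝ) else 0) +
      (de * ∑ σ : Fin N → Bool, (∑ i : Fin N, if (i : ℕ) = N - 1 ∧ τ' i = false ∧ σ = Function.update τ' i true then (1:ℝ) else 0) +
      be * ∑ σ : Fin N → Bool, (∑ i : Fin N, if (i : ℕ) = N - 1 ∧ τ' i = true ∧ σ = Function.update τ' i false then (1:ℝ) else 0))))) := by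
    rw [Finset.sum_congr rfl (fun σ _ => (by simp only [asepJump]; ring :
      asepJump N al be ga de q τ' σ =
      (∑ i : Fin N, ∑ j : Fin N, if (j : ℕ) = (i : ℕ) + 1 ∧ τ' i = true ∧ τ' j = false ∧ σ = Function.update (Function.update τ' i false) j true then (1:ℝ) else 0) +
      (q * (∑ i : Fin N, ∑ j : Fin N, if (j : ℕ) = (i : ℕ) + 1 ∧ τ' i = false ∧ τ' j = true ∧ σ = Function.update (Function.update τ' i true) j false then (1:ℝ) else 0) +
      (al * (∑ i : Fin N, if (i : ℕ) = 0 ∧ τ' i = false ∧ σ = Function.update τ' i true then (1:ℝ) else 0) +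
      (ga * (∑ i : Fin N, if (i : ℕ) = 0 ∧ τ' i = true ∧ σ = Function.update τ' i false then (1:ℝ) else 0) +
      (de * (∑ i : Fin N, if (i : ℕ) = N - 1 ∧ τ' i = false ∧ σ = Function.update τ' i true then (1:ℝ) else 0) +
      be * (∑ i : Fin N, if (i : ℕ) = N - 1 ∧ τ' i = true ∧ σ = Function.update τ' i false then (1:ℝ) else 0)))))))]
    rw [Finset.sum_add_distrib, Finset.sum_add_distrib, Finset.sum_add_distrib,
      Finset.sum_add_distrib, Finset.sum_add_distrib, ← Finset.mul_sum, ← Finset.mul_sum,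
      ← Finset.mul_sum, ← Finset.mul_sum, ← Finset.mul_sum]
  rw [EXP, EXPo, I1, I2, I3, I4, I5, I6, O1, O2, O3, O4, O5, O6]
  have C1 := claimC1 D E W V q hDE τ'
  have C2 := claimC2 D E W V al ga hW τ'
  have C3 := claimC3 D E W V be de hV τ'
  simp only [upd2] at C1
  linear_combination C1 + C2 + C3

end Master

section ZZ
variable {n : ℕ} (D E : Matrix (Fin n) (Fin n) ℝ) (W V : Fin n → ℝ)

lemma sum_XlA_prod (N : ℕ) :
    ∑ τ : Fin N → Bool, (XlA D E τ).prod = (D + E) ^ N := by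
  induction N with
  | zero =>
    rw [pow_zero]
    rw [Finset.sum_congr rfl fun τ _ => (by simp [XlA] : (XlA D E τ).prod = 1)]
    simp
  | succ M ih =>
    rw [← Equiv.sum_comp (Fin.consEquiv (fun _ : Fin (M + 1) => Bool))
      (fun τ => (XlA D E τ).prod), Fintype.sum_prod_type]
    have key : ∀ (b : Bool) (σ : Fin M → Bool),
        (XlA D E ((Fin.consEquiv (fun _ : Fin (M + 1) => Bool)) (b, σ))).prod =
          (if b then D else E) * (XlA D E σ).prod := by
      intro b σ
      simp [XlA, List.ofFn_succ, Fin.consEquiv]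
    rw [Finset.sum_congr rfl fun b _ => Finset.sum_congr rfl fun σ _ => key b σ]
    simp only [← Finset.mul_sum]
    rw [ih, Fintype.sum_bool, pow_succ', Matrix.add_mul]
    simp

lemma PhiA_finsum {ι : Type*} (s : Finset ι) (f : ι → Matrix (Fin n) (Fin n) ℝ) :
    PhiA W V (∑ x ∈ s, f x) = ∑ x ∈ s, PhiA W V (f x) := by
  classical
  induction s using Finset.cons_induction with
  | empty => simp [PhiA]
  | cons a s ha ih => rw [Finset.sum_cons, Finset.sum_cons, PhiA_add, ih]

lemma sum_nuA (N : ℕ) :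
    ∑ τ : Fin N → Bool, nuA D E W V τ = PhiA W V ((D + E) ^ N) := by
  rw [← sum_XlA_prod D E N, PhiA_finsum]
  rfl

end ZZ

end Core


end ASEPproofAux

open Matrix in
/-- Lemma 2.1 (matrix product ansatz): if `D,E,W,V` satisfy the DEHP algebra then
`ν(τ) = W (∏ᵢ (1_{τᵢ=0}E + 1_{τᵢ=1}D)) V` satisfies `∑_τ ν(τ)Q(τ,τ') = 0`; in particular if
`ν ≥ 0` and `Z = W(D+E)^N V ≠ 0` then `μ = ν/Z` is a stationary probability measure. -/
theorem stmt3 (α β γ δ q : ℝ)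
    (hα : 0 < α) (hβ : 0 < β) (hγ : 0 ≤ γ) (hδ : 0 ≤ δ) (hq0 : 0 ≤ q) (hq1 : q < 1)
    (n N : ℕ) (D E : Matrix (Fin n) (Fin n) ℝ) (W V : Fin n → ℝ)
    (hDE : D * E - q • (E * D) = D + E)
    (hW : Matrix.vecMul W (α • E - γ • D) = W)
    (hV : Matrix.mulVec (β • D - δ • E) V = V) :
    (∀ τ' : Fin N → Bool,
      ∑ τ : Fin N → Bool,
        (W ⬝ᵥ Matrix.mulVec (List.ofFn fun i : Fin N => if τ i = true then D else E).prod V) *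
          asepGen N α β γ δ q τ τ' = 0) ∧
    ((∀ τ : Fin N → Bool,
        0 ≤ W ⬝ᵥ Matrix.mulVec (List.ofFn fun i : Fin N => if τ i = true then D else E).prod V) →
      W ⬝ᵥ Matrix.mulVec ((D + E) ^ N) V ≠ 0 →
      (∀ τ : Fin N → Bool,
        0 ≤ (W ⬝ᵥ Matrix.mulVec (List.ofFn fun i : Fin N => if τ i = true then D else E).prod V) /
          (W ⬝ᵥ Matrix.mulVec ((D + E) ^ N) V)) ∧
      (∑ τ : Fin N → Bool,
        (W ⬝ᵥ Matrix.mulVec (List.ofFn fun i : Fin N => if τ i = true then D else E).prod V) /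
          (W ⬝ᵥ Matrix.mulVec ((D + E) ^ N) V) = 1) ∧
      IsStationaryASEP N α β γ δ q (fun τ =>
        (W ⬝ᵥ Matrix.mulVec (List.ofFn fun i : Fin N => if τ i = true then D else E).prod V) /
          (W ⬝ᵥ Matrix.mulVec ((D + E) ^ N) V))) := by
  have part1 : ∀ τ' : Fin N → Bool,
      ∑ τ : Fin N → Bool, nuA D E W V τ * asepGen N α β γ δ q τ τ' = 0 := by
    intro τ'
    rw [sum_gen N α β γ δ q (nuA D E W V) τ',
      master D E W V α β γ δ q hDE hW hV τ', sub_self]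
  have hZsum : (∑ τ : Fin N → Bool, nuA D E W V τ) = W ⬝ᵥ Matrix.mulVec ((D + E) ^ N) V :=
    sum_nuA D E W V N
  constructor
  · exact part1
  · intro hpos hZ
    have hZ0 : 0 ≤ W ⬝ᵥ Matrix.mulVec ((D + E) ^ N) V := by
      rw [← hZsum]
      exact Finset.sum_nonneg fun τ _ => hpos τ
    refine ⟨fun τ => div_nonneg (hpos τ) hZ0, ?_, ?_⟩
    · rw [← Finset.sum_div,
        show (∑ τ : Fin N → Bool,
          (W ⬝ᵥ Matrix.mulVec (List.ofFn fun i : Fin N => if τ i = true then D else E).prod V))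
          = W ⬝ᵥ Matrix.mulVec ((D + E) ^ N) V from hZsum]
      exact div_self hZ
    · intro τ'
      have e : ∀ τ : Fin N → Bool,
          (W ⬝ᵥ Matrix.mulVec (List.ofFn fun i : Fin N => if τ i = true then D else E).prod V) /
              (W ⬝ᵥ Matrix.mulVec ((D + E) ^ N) V) * asepGen N α β γ δ q τ τ' =
            (nuA D E W V τ * asepGen N α β γ δ q τ τ') /
              (W ⬝ᵥ Matrix.mulVec ((D + E) ^ N) V) := fun τ => by
        rw [div_mul_eq_mul_div]
        rfl
      rw [Finset.sum_congr rfl fun τ _ => e τ, ← Finset.sum_div, part1 τ', zero_div]
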